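/- Let a > 0, c ∈ ℝ, b, x₀ ∈ ℝⁿ, and P(x) = c + b·(x-x₀) + (a/2)|x-x₀|². Then for every point x ∈ ℝⁿ, the open ball in ℝ^{n+1} of radius 1/a centered at (x_v, P(x_v) + 1/a), where x_v is the vertex of the paraboloid (x_v = x₀ - b/a), is contained in the open epigraph {(y,t) : t > P(y)}. In particular it is disjoint from the subgraph {(y,t) : t < P(y)}. -/

import Mathlib

open Set

/-- the open euclidean ball of radius `1/a` centered at `(x_v, P(x_v) + 1/a)`,
where `x_v = x₀ - b/a` is the vertex of the paraboloid
`P(x) = c + b·(x-x₀) + (a/2)|x-x₀|²`, is contained in the open epigraph of `P`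
(in particular it is disjoint from the subgraph of `P`). -/
theorem ball_in_epigraph_of_paraboloid (n : ℕ) (a : ℝ) (ha : 0 < a) (c : ℝ)
    (b x₀ : EuclideanSpace ℝ (Fin n)) (P : EuclideanSpace ℝ (Fin n) → ℝ)
    (hP : ∀ x, P x = c + (inner ℝ b (x - x₀) : ℝ) + a / 2 * ‖x - x₀‖ ^ 2)
    (xv : EuclideanSpace ℝ (Fin n)) (hxv : xv = x₀ - a⁻¹ • b) :
    (∀ (y : EuclideanSpace ℝ (Fin n)) (t : ℝ),
        ‖y - xv‖ ^ 2 + (t - (P xv + 1 / a)) ^ 2 < (1 / a) ^ 2 → P y < t) ∧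
      ∀ (y : EuclideanSpace ℝ (Fin n)) (t : ℝ),
        ‖y - xv‖ ^ 2 + (t - (P xv + 1 / a)) ^ 2 < (1 / a) ^ 2 → ¬ t < P y := by
  have key : ∀ y, P y = P xv + a / 2 * ‖y - xv‖ ^ 2 := by
    intro y
    have h1 : y - x₀ = (y - xv) - a⁻¹ • b := by rw [hxv]; abel
    have h2 : xv - x₀ = -(a⁻¹ • b) := by rw [hxv]; abel
    rw [hP y, hP xv, h1, h2]
    have e1 : ‖(y - xv) - a⁻¹ • b‖ ^ 2 =
        ‖y - xv‖ ^ 2 - 2 * (inner ℝ b (y - xv) : ℝ) * a⁻¹ + a⁻¹ ^ 2 * ‖b‖ ^ 2 := by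
      rw [norm_sub_sq_real, real_inner_smul_right, norm_smul, real_inner_comm]
      rw [Real.norm_eq_abs, abs_of_pos (inv_pos.mpr ha)]
      ring
    have e2 : (inner ℝ b ((y - xv) - a⁻¹ • b) : ℝ) =
        (inner ℝ b (y - xv) : ℝ) - a⁻¹ * ‖b‖ ^ 2 := by
      rw [inner_sub_right, real_inner_smul_right, real_inner_self_eq_norm_sq]
    have e3 : (inner ℝ b (-(a⁻¹ • b)) : ℝ) = -(a⁻¹ * ‖b‖ ^ 2) := by
      rw [inner_neg_right, real_inner_smul_right, real_inner_self_eq_norm_sq]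
    have e4 : ‖-(a⁻¹ • b)‖ ^ 2 = a⁻¹ ^ 2 * ‖b‖ ^ 2 := by
      rw [norm_neg, norm_smul]
      rw [Real.norm_eq_abs, abs_of_pos (inv_pos.mpr ha)]
      ring
    rw [e1, e2, e3, e4]
    field_simp
    ring
  have main : ∀ (y : EuclideanSpace ℝ (Fin n)) (t : ℝ),
      ‖y - xv‖ ^ 2 + (t - (P xv + 1 / a)) ^ 2 < (1 / a) ^ 2 → P y < t := by
    intro y t h
    rw [key y]
    set s := t - P xv with hs
    have id1 : (t - (P xv + 1 / a)) ^ 2 = s ^ 2 - 2 * s * (1 / a) + (1 / a) ^ 2 := by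
      rw [hs]; ring
    have h2 : ‖y - xv‖ ^ 2 + s ^ 2 < 2 * s * (1 / a) := by
      rw [id1] at h; linarith
    have h3 : a * (‖y - xv‖ ^ 2 + s ^ 2) < a * (2 * s * (1 / a)) :=
      mul_lt_mul_of_pos_left h2 ha
    have id2 : a * (2 * s * (1 / a)) = 2 * s := by field_simp
    have hns : 0 ≤ a * s ^ 2 := mul_nonneg ha.le (sq_nonneg s)
    rw [id2] at h3
    have : a / 2 * ‖y - xv‖ ^ 2 < s := by linarith
    linarith
  exact ⟨main, fun y t h h' => absurd (main y t h) (not_lt.mpr h'.le)⟩
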